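/- Let H and K be complex Hilbert spaces, let A ∈ B(H) and B ∈ B(K) be bounded linear operators with σ(A) ∩ σ(B) = ∅, and let X ∈ B(K, H) be a bounded linear operator. If AX = XB, then X = 0. -/

import Mathlib

/-!
Rosenblum's argument. The relation `AX = XB` passes to resolvents, `R_A(z) X = X R_B(z)` on
`ρ(A) ∩ ρ(B)`, so `R_A(z) X` on `ρ(A)` and `X R_B(z)` on `ρ(B)` glue to a single function on
`ρ(A) ∪ ρ(B) = ℂ`. It is entire and tends to `0` at infinity with `R_A`, hence vanishes by
Liouville; as `R_A(z)` is invertible, `X = 0`.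
-/

open Filter Topology Bornology ContinuousLinearMap

namespace spectrum

variable {𝕜 R : Type*} [NontriviallyNormedField 𝕜] [NormedRing R] [NormedAlgebra 𝕜 R]
  [CompleteSpace R]

theorem differentiableOn_resolvent (a : R) :
    DifferentiableOn 𝕜 (resolvent a) (resolventSet 𝕜 a) :=
  fun _ hz ↦ (hasDerivAt_resolvent_const_left hz).differentiableAt.differentiableWithinAt

end spectrum

namespace ContinuousLinearMap

section Intertwining

variable {𝕜 E F : Type*} [NontriviallyNormedField 𝕜]
  [NormedAddCommGroup E] [NormedSpace 𝕜 E] [NormedAddCommGroup F] [NormedSpace 𝕜 F]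
  {A : E →L[𝕜] E} {B : F →L[𝕜] F} {X : F →L[𝕜] E}

theorem algebraMap_sub_comp_eq_comp_algebraMap_sub (hX : A ∘L X = X ∘L B) (z : 𝕜) :
    (algebraMap 𝕜 _ z - A) ∘L X = X ∘L (algebraMap 𝕜 _ z - B) := by
  rw [sub_comp, comp_sub, hX]
  ext x
  simp [Algebra.algebraMap_eq_smul_one]

theorem resolvent_comp_eq_comp_resolvent (hX : A ∘L X = X ∘L B) {z : 𝕜}
    (hA : z ∈ resolventSet 𝕜 A) (hB : z ∈ resolventSet 𝕜 B) :
    resolvent A z ∘L X = X ∘L resolvent B z := by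
  have hA' : resolvent A z ∘L (algebraMap 𝕜 _ z - A) = 1 :=
    Ring.inverse_mul_cancel _ (spectrum.mem_resolventSet_iff.mp hA)
  have hB' : (algebraMap 𝕜 _ z - B) ∘L resolvent B z = 1 :=
    Ring.mul_inverse_cancel _ (spectrum.mem_resolventSet_iff.mp hB)
  calc resolvent A z ∘L X
      = resolvent A z ∘L X ∘L (algebraMap 𝕜 _ z - B) ∘L resolvent B z := by rw [hB']; rfl
    _ = resolvent A z ∘L ((algebraMap 𝕜 _ z - A) ∘L X) ∘L resolvent B z := by
        rw [algebraMap_sub_comp_eq_comp_algebraMap_sub hX, comp_assoc]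
    _ = X ∘L resolvent B z := by rw [← comp_assoc, ← comp_assoc, hA']; rfl

theorem eq_zero_of_resolvent_comp_eq_zero {z : 𝕜} (hz : z ∈ resolventSet 𝕜 A)
    (h : resolvent A z ∘L X = 0) : X = 0 := by
  calc X = (↑hz.unit * ↑hz.unit⁻¹ : E →L[𝕜] E) ∘L X := by rw [Units.mul_inv]; rfl
    _ = 0 := by rw [← spectrum.resolvent_eq hz, mul_def, comp_assoc, h, comp_zero]

open Classical in
noncomputable def intertwinedResolvent (A : E →L[𝕜] E) (B : F →L[𝕜] F) (X : F →L[𝕜] E)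
    (z : 𝕜) : F →L[𝕜] E :=
  if z ∈ resolventSet 𝕜 A then resolvent A z ∘L X else X ∘L resolvent B z

theorem intertwinedResolvent_of_mem_left {z : 𝕜} (hz : z ∈ resolventSet 𝕜 A) :
    intertwinedResolvent A B X z = resolvent A z ∘L X :=
  if_pos hz

theorem intertwinedResolvent_of_mem_right (hX : A ∘L X = X ∘L B) {z : 𝕜}
    (hz : z ∈ resolventSet 𝕜 B) : intertwinedResolvent A B X z = X ∘L resolvent B z := by
  by_cases hA : z ∈ resolventSet 𝕜 A
  · rw [intertwinedResolvent_of_mem_left hA, resolvent_comp_eq_comp_resolvent hX hA hz]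
  · exact if_neg hA

end Intertwining

section Liouville

variable {E F : Type*} [NormedAddCommGroup E] [NormedSpace ℂ E] [CompleteSpace E]
  [NormedAddCommGroup F] [NormedSpace ℂ F] {A : E →L[ℂ] E} {B : F →L[ℂ] F} {X : F →L[ℂ] E}

theorem differentiable_intertwinedResolvent [CompleteSpace F] (hX : A ∘L X = X ∘L B)
    (hAB : spectrum ℂ A ∩ spectrum ℂ B = ∅) : Differentiable ℂ (intertwinedResolvent A B X) := by
  have hcover : resolventSet ℂ A ∪ resolventSet ℂ B = Set.univ :=
    Set.eq_univ_of_forall fun z ↦ by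
      by_contra h
      rw [Set.mem_union, not_or] at h
      exact hAB.subset h
  refine differentiable_of_differentiableOn_union_of_isOpen ?_ ?_ hcover
    (spectrum.isOpen_resolventSet A) (spectrum.isOpen_resolventSet B)
  · exact ((spectrum.differentiableOn_resolvent A).clm_comp (differentiableOn_const X)).congr
      fun _ hz ↦ intertwinedResolvent_of_mem_left hz
  · exact ((differentiableOn_const X).clm_comp (spectrum.differentiableOn_resolvent B)).congr
      fun _ hz ↦ intertwinedResolvent_of_mem_right hX hz

theorem tendsto_intertwinedResolvent_cobounded :
    Tendsto (intertwinedResolvent A B X) (cobounded ℂ) (𝓝 0) := by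
  have hcomp : Tendsto (fun z ↦ resolvent A z ∘L X) (cobounded ℂ) (𝓝 0) := by
    simpa [Function.comp_def] using ((compL ℂ F E E).flip X).continuous.tendsto 0 |>.comp
      (spectrum.resolvent_tendsto_cobounded A)
  refine hcomp.congr' ?_
  filter_upwards [spectrum.eventually_isUnit_resolvent A] with z hz
  exact (intertwinedResolvent_of_mem_left (spectrum.isUnit_resolvent.mpr hz)).symm

theorem intertwinedResolvent_eq_zero [CompleteSpace F] (hX : A ∘L X = X ∘L B)
    (hAB : spectrum ℂ A ∩ spectrum ℂ B = ∅) : intertwinedResolvent A B X = 0 :=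
  funext fun z ↦ (differentiable_intertwinedResolvent hX hAB).apply_eq_of_tendsto_cocompact z <| by
    simpa [Metric.cobounded_eq_cocompact] using tendsto_intertwinedResolvent_cobounded

end Liouville

end ContinuousLinearMap

/-- **Rosenblum's corollary.** If `A ∈ B(H)` and `B ∈ B(K)` have disjoint spectra, then the
only bounded operator `X : K → H` with `AX = XB` is `X = 0`. -/
theorem eq_zero_of_comp_eq_comp_of_disjoint_spectrum
    {H K : Type*} [NormedAddCommGroup H] [InnerProductSpace ℂ H] [CompleteSpace H]
    [NormedAddCommGroup K] [InnerProductSpace ℂ K] [CompleteSpace K]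
    (A : H →L[ℂ] H) (B : K →L[ℂ] K) (X : K →L[ℂ] H)
    (hspec : spectrum ℂ A ∩ spectrum ℂ B = ∅)
    (hX : A ∘L X = X ∘L B) : X = 0 := by
  obtain ⟨z, hz⟩ := (spectrum.eventually_isUnit_resolvent (𝕜 := ℂ) A).exists
  have hzA : z ∈ resolventSet ℂ A := spectrum.isUnit_resolvent.mpr hz
  refine eq_zero_of_resolvent_comp_eq_zero hzA ?_
  rw [← intertwinedResolvent_of_mem_left (B := B) hzA, intertwinedResolvent_eq_zero hX hspec,
    Pi.zero_apply]
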